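/- arXiv:1211.2912 — 6 statements merged into one kernel-verified Lean document; each statement's English description precedes it below -/
import Mathlib

section
/- For all z ∈ ℂ∖{0} with 1 − q²z ≠ 0 and 1 − q²/z ≠ 0, the R-matrix satisfies the unitarity relation R̄(z) ∘ P ∘ R̄(1/z) ∘ P = id on ℂ^n ⊗ ℂ^n, where P is the graded permutation operator defined by P(v_i ⊗ v_j) = (−1)^{[i][j]} v_j ⊗ v_i. -/
noncomputable section

/-- The `ℤ₂`-grading: `[j] = 1` for `1 ≤ j ≤ M+1` (0-based: `j.val ≤ M`), `0` otherwise. -/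
def gr (M : ℕ) {n : ℕ} (j : Fin n) : ℕ := if (j : ℕ) ≤ M then 1 else 0

/-- Matrix entries `R̄(z)_{k1,k2}^{j1,j2}` of the `U_q(ŝl(M+1|N+1))` R-matrix
(without scalar normalization); lower indices = output, upper indices = input. -/
def Rent (M N : ℕ) (q z : ℂ) (k1 k2 j1 j2 : Fin (M + N + 2)) : ℂ :=
  if k1 = j1 ∧ k2 = j2 ∧ j1 = j2 then
    (if (j1 : ℕ) ≤ M then (-1 : ℂ) else -(q ^ 2 - z) / (1 - q ^ 2 * z))
  else if k1 = j1 ∧ k2 = j2 then (1 - z) * q / (1 - q ^ 2 * z)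
  else if k1 = j2 ∧ k2 = j1 then
    (if (k1 : ℕ) < (k2 : ℕ) then
        (-1 : ℂ) ^ (gr M k1 * gr M k2) * (1 - q ^ 2) / (1 - q ^ 2 * z)
      else (-1 : ℂ) ^ (gr M k1 * gr M k2) * (1 - q ^ 2) * z / (1 - q ^ 2 * z))
  else 0

/-- The R-matrix as a matrix on `ℂ^n ⊗ ℂ^n`: row = lower (output) indices,
column = upper (input) indices. -/
def RbarM (M N : ℕ) (q z : ℂ) :
    Matrix (Fin (M + N + 2) × Fin (M + N + 2)) (Fin (M + N + 2) × Fin (M + N + 2)) ℂ :=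
  fun kl jl => Rent M N q z kl.1 kl.2 jl.1 jl.2

/-- The graded permutation operator `P(v_i ⊗ v_j) = (−1)^{[i][j]} v_j ⊗ v_i`. -/
def Pmat (M N : ℕ) :
    Matrix (Fin (M + N + 2) × Fin (M + N + 2)) (Fin (M + N + 2) × Fin (M + N + 2)) ℂ :=
  fun kl jl => if kl.1 = jl.2 ∧ kl.2 = jl.1 then (-1 : ℂ) ^ (gr M jl.1 * gr M jl.2) else 0

/-!
`R̄(z)` only couples `v_a ⊗ v_b` with `v_b ⊗ v_a`, and `(P X P)_{(a,b),(c,d)} = ±X_{(b,a),(d,c)}`,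
so `R̄(z) P R̄(1/z) P` splits into `1 × 1` blocks on `v_a ⊗ v_a` and `2 × 2` blocks on
`span {v_a ⊗ v_b, v_b ⊗ v_a}`. The graded signs only enter through their squares, and unitarity
of the blocks comes down to
`(q² - z)(q² - z⁻¹) = (1 - z)(1 - z⁻¹)q² + (1 - q²)² = (1 - q²z)(1 - q²z⁻¹)` and
`(1 - z) + z(1 - z⁻¹) = 0`.
-/

def gsign (M : ℕ) {n : ℕ} (k : Fin n × Fin n) : ℂ := (-1) ^ (gr M k.1 * gr M k.2)

lemma gsign_swap {M n : ℕ} (a b : Fin n) : gsign M (b, a) = gsign M (a, b) := by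
  simp only [gsign, Nat.mul_comm]

lemma gsign_mul_self {M n : ℕ} (k : Fin n × Fin n) : gsign M k * gsign M k = 1 := by
  rw [gsign, ← mul_pow, neg_one_mul, neg_neg, one_pow]

section Entries

variable {M N : ℕ} {q z : ℂ} {a b : Fin (M + N + 2)}

lemma Rent_eq_zero {k1 k2 j1 j2 : Fin (M + N + 2)}
    (h : ¬(k1 = j1 ∧ k2 = j2)) (h' : ¬(k1 = j2 ∧ k2 = j1)) :
    Rent M N q z k1 k2 j1 j2 = 0 := by
  rw [Rent, if_neg (fun hh => h ⟨hh.1, hh.2.1⟩), if_neg h, if_neg h']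

lemma Rent_diag_of_le (ha : (a : ℕ) ≤ M) : Rent M N q z a a a a = -1 := by
  rw [Rent, if_pos ⟨rfl, rfl, rfl⟩, if_pos ha]

lemma Rent_diag_of_gt (ha : M < (a : ℕ)) :
    Rent M N q z a a a a = -(q ^ 2 - z) / (1 - q ^ 2 * z) := by
  rw [Rent, if_pos ⟨rfl, rfl, rfl⟩, if_neg ha.not_ge]

lemma Rent_of_ne (hab : a ≠ b) : Rent M N q z a b a b = (1 - z) * q / (1 - q ^ 2 * z) := by
  rw [Rent, if_neg (fun h => hab h.2.2), if_pos ⟨rfl, rfl⟩]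

lemma Rent_swap_of_lt (hab : a < b) :
    Rent M N q z a b b a = gsign M (a, b) * (1 - q ^ 2) / (1 - q ^ 2 * z) := by
  rw [Rent, if_neg (fun h => hab.ne h.1), if_neg (fun h => hab.ne h.1), if_pos ⟨rfl, rfl⟩,
    if_pos (show (a : ℕ) < b from hab), gsign]

lemma Rent_swap_of_gt (hab : b < a) :
    Rent M N q z a b b a = gsign M (a, b) * (1 - q ^ 2) * z / (1 - q ^ 2 * z) := by
  rw [Rent, if_neg (fun h => hab.ne' h.1), if_neg (fun h => hab.ne' h.1), if_pos ⟨rfl, rfl⟩,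
    if_neg (show ¬(a : ℕ) < b from hab.not_gt), gsign]

lemma Rent_diag_unitarity (hz : z ≠ 0) (h1 : 1 - q ^ 2 * z ≠ 0) (h2 : z - q ^ 2 ≠ 0) :
    Rent M N q z a a a a * Rent M N q (1 / z) a a a a = 1 := by
  rcases le_or_gt (a : ℕ) M with ha | ha
  · rw [Rent_diag_of_le ha, Rent_diag_of_le ha]
    norm_num
  · rw [Rent_diag_of_gt ha, Rent_diag_of_gt ha]
    field_simp
    ring

lemma Rent_block_unitarity_diag (hz : z ≠ 0) (h1 : 1 - q ^ 2 * z ≠ 0) (h2 : z - q ^ 2 ≠ 0)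
    (hab : a ≠ b) :
    Rent M N q z a b a b * Rent M N q (1 / z) b a b a
      + Rent M N q z a b b a * Rent M N q (1 / z) a b b a = 1 := by
  have hg := gsign_mul_self (M := M) (a, b)
  -- the form in which `field_simp` meets this denominator
  have h1' : 1 - z * q ^ 2 ≠ 0 := by rwa [mul_comm]
  rw [Rent_of_ne hab, Rent_of_ne hab.symm]
  rcases hab.lt_or_gt with hlt | hgt
  · rw [Rent_swap_of_lt hlt, Rent_swap_of_lt hlt]
    field_simp
    linear_combination (z * (1 - q ^ 2) ^ 2) * hg
  · rw [Rent_swap_of_gt hgt, Rent_swap_of_gt hgt]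
    field_simp
    linear_combination (z * (1 - q ^ 2) ^ 2) * hg

lemma Rent_block_unitarity_offdiag (hz : z ≠ 0) (hab : a ≠ b) :
    Rent M N q z a b a b * Rent M N q (1 / z) b a a b
      + Rent M N q z a b b a * Rent M N q (1 / z) a b a b = 0 := by
  rw [Rent_of_ne hab, Rent_of_ne hab]
  rcases hab.lt_or_gt with hlt | hgt
  · rw [Rent_swap_of_lt hlt, Rent_swap_of_gt hlt, gsign_swap]
    field_simp
    ring
  · rw [Rent_swap_of_gt hgt, Rent_swap_of_lt hgt, gsign_swap]
    field_simp
    ring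

end Entries

section Matrices

variable {M N : ℕ}
  (X : Matrix (Fin (M + N + 2) × Fin (M + N + 2)) (Fin (M + N + 2) × Fin (M + N + 2)) ℂ)
  (k j : Fin (M + N + 2) × Fin (M + N + 2))

lemma mul_Pmat_apply : (X * Pmat M N) k j = X k j.swap * gsign M j := by
  rw [Matrix.mul_apply, Finset.sum_eq_single j.swap]
  · simp [Pmat, gsign]
  · rintro x - hx
    rw [Pmat, if_neg, mul_zero]
    rintro ⟨h1, h2⟩
    exact hx (Prod.ext h1 h2)
  · simp

lemma Pmat_mul_apply : (Pmat M N * X) k j = gsign M k * X k.swap j := by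
  rw [Matrix.mul_apply, Finset.sum_eq_single k.swap]
  · simp [Pmat, gsign, Nat.mul_comm]
  · rintro x - hx
    rw [Pmat, if_neg, zero_mul]
    rintro ⟨h1, h2⟩
    exact hx (Prod.ext h2.symm h1.symm)
  · simp

lemma Pmat_conj_apply :
    (Pmat M N * X * Pmat M N) k j = gsign M k * gsign M j * X k.swap j.swap := by
  rw [mul_Pmat_apply, Pmat_mul_apply]
  ring

lemma RbarM_mul_apply (q z : ℂ) :
    (RbarM M N q z * X) k j = ∑ x ∈ {k, k.swap}, RbarM M N q z k x * X x j := by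
  refine (Finset.sum_subset (Finset.subset_univ _) fun x _ hx => ?_).symm
  simp only [Finset.mem_insert, Finset.mem_singleton, Prod.ext_iff, Prod.fst_swap,
    Prod.snd_swap] at hx
  exact mul_eq_zero_of_left (Rent_eq_zero (by tauto) (by tauto)) _

end Matrices

section Rows

variable {M N : ℕ} {q z : ℂ} (hz : z ≠ 0) (h1 : 1 - q ^ 2 * z ≠ 0) (h2 : z - q ^ 2 ≠ 0)
  (j : Fin (M + N + 2) × Fin (M + N + 2))
include hz h1 h2

lemma unitarity_row_diag (a : Fin (M + N + 2)) :
    ∑ x ∈ {(a, a), (a, a).swap}, RbarM M N q z (a, a) x *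
      (gsign M x * gsign M j * RbarM M N q (1 / z) x.swap j.swap) =
      (1 : Matrix _ _ ℂ) (a, a) j := by
  rw [Prod.swap_prod_mk, Finset.pair_eq_singleton, Finset.sum_singleton, Prod.swap_prod_mk]
  by_cases hj : j = (a, a)
  · subst hj
    rw [Matrix.one_apply_eq, gsign_mul_self, one_mul]
    exact Rent_diag_unitarity hz h1 h2
  · have hR : RbarM M N q (1 / z) (a, a) j.swap = 0 := Rent_eq_zero (by grind) (by grind)
    rw [Matrix.one_apply_ne (Ne.symm hj), hR, mul_zero, mul_zero]

lemma unitarity_row_offdiag {a b : Fin (M + N + 2)} (hab : a ≠ b) :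
    ∑ x ∈ {(a, b), (a, b).swap}, RbarM M N q z (a, b) x *
      (gsign M x * gsign M j * RbarM M N q (1 / z) x.swap j.swap) =
      (1 : Matrix _ _ ℂ) (a, b) j := by
  rw [Prod.swap_prod_mk, Finset.sum_pair (by simp [hab])]
  simp only [Prod.swap_prod_mk]
  by_cases hj : j = (a, b)
  · subst hj
    rw [Matrix.one_apply_eq, gsign_mul_self, one_mul, gsign_swap, gsign_mul_self, one_mul]
    exact Rent_block_unitarity_diag hz h1 h2 hab
  by_cases hj' : j = (b, a)
  · subst hj'
    rw [Matrix.one_apply_ne (by simp [hab]), Prod.swap_prod_mk, gsign_swap, gsign_mul_self,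
      one_mul, one_mul]
    exact Rent_block_unitarity_offdiag hz hab
  have hba : RbarM M N q (1 / z) (b, a) j.swap = 0 := Rent_eq_zero (by grind) (by grind)
  have hab' : RbarM M N q (1 / z) (a, b) j.swap = 0 := Rent_eq_zero (by grind) (by grind)
  rw [Matrix.one_apply_ne (Ne.symm hj), hba, hab']
  simp only [mul_zero, add_zero]

end Rows

theorem Rbar_unitarity_general (M N : ℕ) (q : ℂ) (z : ℂ) (hz : z ≠ 0)
    (h1 : 1 - q ^ 2 * z ≠ 0) (h2 : 1 - q ^ 2 / z ≠ 0) :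
    RbarM M N q z * Pmat M N * RbarM M N q (1 / z) * Pmat M N = 1 := by
  have h2' : z - q ^ 2 ≠ 0 := by
    rwa [one_sub_div hz, div_ne_zero_iff, and_iff_left hz] at h2
  ext ⟨a, b⟩ j
  rw [Matrix.mul_assoc, Matrix.mul_assoc, ← Matrix.mul_assoc (Pmat M N), RbarM_mul_apply]
  simp only [Pmat_conj_apply]
  rcases eq_or_ne a b with rfl | hab
  · exact unitarity_row_diag hz h1 h2' j a
  · exact unitarity_row_offdiag hz h1 h2' j hab

/-- Unitarity of the R-matrix: `R̄(z) ∘ P ∘ R̄(1/z) ∘ P = id`. -/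
theorem Rbar_unitarity (M N : ℕ) (hMN : M ≠ N) (q : ℂ) (z : ℂ) (hz : z ≠ 0)
    (h1 : 1 - q ^ 2 * z ≠ 0) (h2 : 1 - q ^ 2 / z ≠ 0) :
    RbarM M N q z * Pmat M N * RbarM M N q (1 / z) * Pmat M N = 1 :=
  Rbar_unitarity_general M N q z hz h1 h2
end
end

section
/- Define the Perk–Schultz R-matrix R^{PS}(z) on ℂ^n ⊗ ℂ^n by its entries R^{PS}(z)_{k1,k2}^{j1,j2} = (−1)^{[k1][k2]} R̄(z)_{k1,k2}^{j1,j2}. Then R^{PS} satisfies the ordinary (ungraded) Yang–Baxter equation: for all z1, z2, z3 ∈ ℂ∖{0} with 1 − q²z1/z2 ≠ 0, 1 − q²z1/z3 ≠ 0 and 1 − q²z2/z3 ≠ 0, one has R^{PS}_{12}(z1/z2) ∘ R^{PS}_{13}(z1/z3) ∘ R^{PS}_{23}(z2/z3) = R^{PS}_{23}(z2/z3) ∘ R^{PS}_{13}(z1/z3) ∘ R^{PS}_{12}(z1/z2) as operators on (ℂ^n)^{⊗3}, where X_{ab} denotes the operator acting as X on the a-th and b-th tensor factors and as the identity on the remaining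 factor. -/
noncomputable section

/-- The Perk–Schultz R-matrix entries:
`R^{PS}(z)_{k1,k2}^{j1,j2} = (−1)^{[k1][k2]} R̄(z)_{k1,k2}^{j1,j2}`. -/
def RPS (M N : ℕ) (q z : ℂ) (k1 k2 j1 j2 : Fin (M + N + 2)) : ℂ :=
  (-1 : ℂ) ^ (gr M k1 * gr M k2) * Rent M N q z k1 k2 j1 j2

/-- `R^{PS}` acting on the first and second tensor factors of `(ℂ^n)^{⊗3}`. -/
def RPS12 (M N : ℕ) (q z : ℂ) :
    Matrix (Fin (M + N + 2) × Fin (M + N + 2) × Fin (M + N + 2))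
      (Fin (M + N + 2) × Fin (M + N + 2) × Fin (M + N + 2)) ℂ :=
  fun a b => RPS M N q z a.1 a.2.1 b.1 b.2.1 * (if a.2.2 = b.2.2 then 1 else 0)

/-- `R^{PS}` acting on the first and third tensor factors of `(ℂ^n)^{⊗3}`. -/
def RPS13 (M N : ℕ) (q z : ℂ) :
    Matrix (Fin (M + N + 2) × Fin (M + N + 2) × Fin (M + N + 2))
      (Fin (M + N + 2) × Fin (M + N + 2) × Fin (M + N + 2)) ℂ :=
  fun a b => RPS M N q z a.1 a.2.2 b.1 b.2.2 * (if a.2.1 = b.2.1 then 1 else 0)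

/-- `R^{PS}` acting on the second and third tensor factors of `(ℂ^n)^{⊗3}`. -/
def RPS23 (M N : ℕ) (q z : ℂ) :
    Matrix (Fin (M + N + 2) × Fin (M + N + 2) × Fin (M + N + 2))
      (Fin (M + N + 2) × Fin (M + N + 2) × Fin (M + N + 2)) ℂ :=
  fun a b => RPS M N q z a.2.1 a.2.2 b.2.1 b.2.2 * (if a.1 = b.1 then 1 else 0)

/-!
`R^{PS}(z)` is an "ice rule" matrix: it sends `v_i ⊗ v_j` to a multiple of itself plus a
multiple of `v_j ⊗ v_i`, with amplitudes `transNum z i j / (1 − q²z)` and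
`reflNum z i j / (1 − q²z)`; the Perk–Schultz signs are exactly what removes the grading from the
reflection amplitudes. Hence both sides of the Yang–Baxter equation map `v_i ⊗ v_j ⊗ v_k` into the
span of the permuted vectors, and comparing coefficients reduces the equation to a scalar identity
in the amplitudes. The normalizations factor out of that identity, and what remains is a
polynomial identity in `u = z₁/z₂`, `v = z₂/z₃` and `q`, checked case by case on the relative
order and the grading of `i, j, k`.
-/

theorem Matrix.mul_apply_of_apply_eq_add {ι R : Type*} [Fintype ι] [DecidableEq ι]
    [NonAssocSemiring R] {A : Matrix ι ι R} {σ τ : ι → ι} {t s : ι → R}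
    (hA : ∀ a c, A a c = t a * (1 : Matrix ι ι R) (σ a) c + s a * (1 : Matrix ι ι R) (τ a) c)
    (X : Matrix ι ι R) (a b : ι) : (A * X) a b = t a * X (σ a) b + s a * X (τ a) b := by
  simp [Matrix.mul_apply, hA, add_mul, Finset.sum_add_distrib, Matrix.one_apply]

namespace PerkSchultz

variable {ι : Type*}

/- For an R-matrix `R(z)` on `ι`-indexed vectors whose entry from `v_i ⊗ v_j` to itself is
`t z i j` and from `v_j ⊗ v_i` to `v_i ⊗ v_j` is `s z i j`, these are the `(i, j, k)`-entries of
`R₁₂(u) R₁₃(uv) R₂₃(v) X` and `R₂₃(v) R₁₃(uv) R₁₂(u) X`, where `f a b c` is the entry of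
`X` at `(a, b, c)` in a fixed column. -/

def ybeLeft (t s : ℂ → ι → ι → ℂ) (u v : ℂ) (f : ι → ι → ι → ℂ) (i j k : ι) : ℂ :=
  t u i j * (t (u * v) i k * (t v j k * f i j k + s v j k * f i k j)
      + s (u * v) i k * (t v j i * f k j i + s v j i * f k i j))
    + s u i j * (t (u * v) j k * (t v i k * f j i k + s v i k * f j k i)
      + s (u * v) j k * (t v i j * f k i j + s v i j * f k j i))

def ybeRight (t s : ℂ → ι → ι → ℂ) (u v : ℂ) (f : ι → ι → ι → ℂ) (i j k : ι) : ℂ :=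
  t v j k * (t (u * v) i k * (t u i j * f i j k + s u i j * f j i k)
      + s (u * v) i k * (t u k j * f k j i + s u k j * f j k i))
    + s v j k * (t (u * v) i j * (t u i k * f i k j + s u i k * f k i j)
      + s (u * v) i j * (t u j k * f j k i + s u j k * f k j i))

theorem ybeLeft_smul (c : ℂ → ℂ) (t s : ℂ → ι → ι → ℂ) (u v : ℂ) (f : ι → ι → ι → ℂ)
    (i j k : ι) :
    ybeLeft (fun z i j => c z * t z i j) (fun z i j => c z * s z i j) u v f i j k
      = c u * c (u * v) * c v * ybeLeft t s u v f i j k := by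
  simp only [ybeLeft]
  ring

theorem ybeRight_smul (c : ℂ → ℂ) (t s : ℂ → ι → ι → ℂ) (u v : ℂ) (f : ι → ι → ι → ℂ)
    (i j k : ι) :
    ybeRight (fun z i j => c z * t z i j) (fun z i j => c z * s z i j) u v f i j k
      = c u * c (u * v) * c v * ybeRight t s u v f i j k := by
  simp only [ybeRight]
  ring

variable [LinearOrder ι] (odd : ι → Prop) [DecidablePred odd]

def transNum (q z : ℂ) (i j : ι) : ℂ :=
  if i = j then (if odd i then 1 - z else -(q ^ 2 * (1 - z)))
  else if odd i ∧ odd j then -((1 - z) * q) else (1 - z) * q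

def reflNum (q z : ℂ) (i j : ι) : ℂ :=
  if i < j then 1 - q ^ 2 else (1 - q ^ 2) * z

variable (q u v : ℂ) (f : ι → ι → ι → ℂ)

theorem ybe_num_of_eq₁₂ (i k : ι) :
    ybeLeft (transNum odd q) (reflNum q) u v f i i k
      = ybeRight (transNum odd q) (reflNum q) u v f i i k := by
  obtain rfl | hik := eq_or_ne i k
  · by_cases hi : odd i <;>
      simp only [ybeLeft, ybeRight, transNum, reflNum, lt_irrefl, hi, ↓reduceIte] <;> ring
  · rcases hik.lt_or_gt with h | h <;> by_cases hi : odd i <;> by_cases hk : odd k <;>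
      simp only [ybeLeft, ybeRight, transNum, reflNum, lt_irrefl, hik, hik.symm, h, h.not_gt,
        hi, hk, and_true, and_false, ↓reduceIte] <;> ring

theorem ybe_num_of_eq₂₃ {i j : ι} (hij : i ≠ j) :
    ybeLeft (transNum odd q) (reflNum q) u v f i j j
      = ybeRight (transNum odd q) (reflNum q) u v f i j j := by
  rcases hij.lt_or_gt with h | h <;> by_cases hi : odd i <;> by_cases hj : odd j <;>
    simp only [ybeLeft, ybeRight, transNum, reflNum, lt_irrefl, hij, hij.symm, h, h.not_gt,
      hi, hj, and_true, and_false, ↓reduceIte] <;> ring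

theorem ybe_num_of_eq₁₃ {i j : ι} (hij : i ≠ j) :
    ybeLeft (transNum odd q) (reflNum q) u v f i j i
      = ybeRight (transNum odd q) (reflNum q) u v f i j i := by
  rcases hij.lt_or_gt with h | h <;> by_cases hi : odd i <;> by_cases hj : odd j <;>
    simp only [ybeLeft, ybeRight, transNum, reflNum, lt_irrefl, hij, hij.symm, h, h.not_gt,
      hi, hj, and_true, and_false, ↓reduceIte] <;> ring

theorem ybe_num_of_pairwise_ne {i j k : ι} (hij : i ≠ j) (hjk : j ≠ k) (hik : i ≠ k) :
    ybeLeft (transNum odd q) (reflNum q) u v f i j k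
      = ybeRight (transNum odd q) (reflNum q) u v f i j k := by
  rcases hij.lt_or_gt with h₁ | h₁ <;> rcases hjk.lt_or_gt with h₂ | h₂ <;>
    rcases hik.lt_or_gt with h₃ | h₃ <;>
    first
    | (exfalso; order)
    | (by_cases hi : odd i <;> by_cases hj : odd j <;> by_cases hk : odd k <;>
        simp only [ybeLeft, ybeRight, transNum, reflNum, hij, hij.symm, hjk, hjk.symm, hik,
          h₁, h₁.not_gt, h₂, h₂.not_gt, h₃, h₃.not_gt, hi, hj, hk, and_true, and_false,
          ↓reduceIte] <;> ring)

theorem ybe_num (i j k : ι) :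
    ybeLeft (transNum odd q) (reflNum q) u v f i j k
      = ybeRight (transNum odd q) (reflNum q) u v f i j k := by
  obtain rfl | hij := eq_or_ne i j
  · exact ybe_num_of_eq₁₂ odd q u v f i k
  obtain rfl | hjk := eq_or_ne j k
  · exact ybe_num_of_eq₂₃ odd q u v f hij
  obtain rfl | hik := eq_or_ne i k
  · exact ybe_num_of_eq₁₃ odd q u v f hij
  exact ybe_num_of_pairwise_ne odd q u v f hij hjk hik

theorem ybe_normalized (i j k : ι) :
    ybeLeft (fun z i j => (1 - q ^ 2 * z)⁻¹ * transNum odd q z i j)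
        (fun z i j => (1 - q ^ 2 * z)⁻¹ * reflNum q z i j) u v f i j k
      = ybeRight (fun z i j => (1 - q ^ 2 * z)⁻¹ * transNum odd q z i j)
        (fun z i j => (1 - q ^ 2 * z)⁻¹ * reflNum q z i j) u v f i j k := by
  rw [ybeLeft_smul (fun z => (1 - q ^ 2 * z)⁻¹), ybeRight_smul (fun z => (1 - q ^ 2 * z)⁻¹),
    ybe_num]

end PerkSchultz

open PerkSchultz

abbrev IsOddIndex (M : ℕ) {n : ℕ} (j : Fin n) : Prop := (j : ℕ) ≤ M

theorem RPS_eq (M N : ℕ) (q z : ℂ) (hz : 1 - q ^ 2 * z ≠ 0) (k1 k2 j1 j2 : Fin (M + N + 2)) :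
    RPS M N q z k1 k2 j1 j2 = (1 - q ^ 2 * z)⁻¹ *
      ((if k1 = j1 ∧ k2 = j2 then transNum (IsOddIndex M) q z k1 k2 else 0)
        + (if k2 = j1 ∧ k1 = j2 then reflNum q z k1 k2 else 0)) := by
  unfold RPS Rent transNum reflNum IsOddIndex gr
  simp only [Fin.ext_iff, Fin.lt_def]
  split_ifs <;> first
    | omega
    | (field_simp; ring)

section Entries

variable (M N : ℕ) (q : ℂ) {z : ℂ}

theorem RPS12_apply (hz : 1 - q ^ 2 * z ≠ 0)
    (a c : Fin (M + N + 2) × Fin (M + N + 2) × Fin (M + N + 2)) :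
    RPS12 M N q z a c
      = (1 - q ^ 2 * z)⁻¹ * transNum (IsOddIndex M) q z a.1 a.2.1 * (1 : Matrix _ _ ℂ) a c
      + (1 - q ^ 2 * z)⁻¹ * reflNum q z a.1 a.2.1 * (1 : Matrix _ _ ℂ) (a.2.1, a.1, a.2.2) c := by
  obtain ⟨a1, a2, a3⟩ := a
  obtain ⟨c1, c2, c3⟩ := c
  simp only [RPS12, RPS_eq M N q z hz, Matrix.one_apply, Prod.mk.injEq, ite_and]
  split_ifs <;> ring

theorem RPS13_apply (hz : 1 - q ^ 2 * z ≠ 0)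
    (a c : Fin (M + N + 2) × Fin (M + N + 2) × Fin (M + N + 2)) :
    RPS13 M N q z a c
      = (1 - q ^ 2 * z)⁻¹ * transNum (IsOddIndex M) q z a.1 a.2.2 * (1 : Matrix _ _ ℂ) a c
      + (1 - q ^ 2 * z)⁻¹ * reflNum q z a.1 a.2.2 * (1 : Matrix _ _ ℂ) (a.2.2, a.2.1, a.1) c := by
  obtain ⟨a1, a2, a3⟩ := a
  obtain ⟨c1, c2, c3⟩ := c
  simp only [RPS13, RPS_eq M N q z hz, Matrix.one_apply, Prod.mk.injEq, ite_and]
  split_ifs <;> ring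

theorem RPS23_apply (hz : 1 - q ^ 2 * z ≠ 0)
    (a c : Fin (M + N + 2) × Fin (M + N + 2) × Fin (M + N + 2)) :
    RPS23 M N q z a c
      = (1 - q ^ 2 * z)⁻¹ * transNum (IsOddIndex M) q z a.2.1 a.2.2 * (1 : Matrix _ _ ℂ) a c
      + (1 - q ^ 2 * z)⁻¹ * reflNum q z a.2.1 a.2.2 * (1 : Matrix _ _ ℂ) (a.1, a.2.2, a.2.1) c := by
  obtain ⟨a1, a2, a3⟩ := a
  obtain ⟨c1, c2, c3⟩ := c
  simp only [RPS23, RPS_eq M N q z hz, Matrix.one_apply, Prod.mk.injEq, ite_and]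
  split_ifs <;> ring

end Entries

theorem PerkSchultz_YangBaxter_general (M N : ℕ) (q : ℂ)
    (z1 z2 z3 : ℂ) (hz2 : z2 ≠ 0)
    (h12 : 1 - q ^ 2 * (z1 / z2) ≠ 0) (h13 : 1 - q ^ 2 * (z1 / z3) ≠ 0)
    (h23 : 1 - q ^ 2 * (z2 / z3) ≠ 0) :
    RPS12 M N q (z1 / z2) * RPS13 M N q (z1 / z3) * RPS23 M N q (z2 / z3)
      = RPS23 M N q (z2 / z3) * RPS13 M N q (z1 / z3) * RPS12 M N q (z1 / z2) := by
  rw [← div_mul_div_cancel₀ (c := z3) hz2] at h13 ⊢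
  ext ⟨i, j, k⟩ b
  simp only [Matrix.mul_assoc, Matrix.mul_apply_of_apply_eq_add (RPS12_apply M N q h12),
    Matrix.mul_apply_of_apply_eq_add (RPS13_apply M N q h13),
    Matrix.mul_apply_of_apply_eq_add (RPS23_apply M N q h23),
    RPS12_apply M N q h12, RPS23_apply M N q h23]
  exact ybe_normalized (IsOddIndex M) q _ _
    (fun i' j' k' => (1 : Matrix _ _ ℂ) (i', j', k') b) i j k

/-- The Perk–Schultz R-matrix satisfies the ordinary (ungraded) Yang–Baxter equation. -/
theorem PerkSchultz_YangBaxter (M N : ℕ) (hMN : M ≠ N) (q : ℂ)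
    (z1 z2 z3 : ℂ) (hz1 : z1 ≠ 0) (hz2 : z2 ≠ 0) (hz3 : z3 ≠ 0)
    (h12 : 1 - q ^ 2 * (z1 / z2) ≠ 0) (h13 : 1 - q ^ 2 * (z1 / z3) ≠ 0)
    (h23 : 1 - q ^ 2 * (z2 / z3) ≠ 0) :
    RPS12 M N q (z1 / z2) * RPS13 M N q (z1 / z3) * RPS23 M N q (z2 / z3)
      = RPS23 M N q (z2 / z3) * RPS13 M N q (z1 / z3) * RPS12 M N q (z1 / z2) :=
  PerkSchultz_YangBaxter_general M N q z1 z2 z3 hz2 h12 h13 h23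
end
end

section
/- Sufficiency of the one-parameter family: for every β ∈ ℂ, the function ρ(z) = z(1 − βz)/(z − β) (which equals (1 − βz)/(1 − β/z)) satisfies F(z1, z2) = 0 for all z1, z2 ∈ ℂ∖{0, β}; and the function ρ(z) = z² satisfies F(z1, z2) = 0 for all z1, z2 ∈ ℂ∖{0}. -/
noncomputable section

/-- The boundary functional equation `F(z1, z2)` governing the ratio of two
diagonal entries of a diagonal solution of the graded boundary Yang–Baxter
equation associated with `U_q(ŝl(M+1|N+1))`. -/
def Fbd (ρ : ℂ → ℂ) (z1 z2 : ℂ) : ℂ :=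
  (1 - z1 / z2) * (z1 * z2 - ρ z1 * ρ z2) + (1 - z1 * z2) * (ρ z1 - (z1 / z2) * ρ z2)

def boundaryRho (β z : ℂ) : ℂ := z * (1 - β * z) / (z - β)

theorem Fbd_boundaryRho_eq_zero {β z₁ z₂ : ℂ} (hz₁ : z₁ ≠ β) (hz₂ : z₂ ≠ 0) (hz₂β : z₂ ≠ β) :
    Fbd (boundaryRho β) z₁ z₂ = 0 := by
  have hz₁_sub : z₁ - β ≠ 0 := sub_ne_zero.mpr hz₁
  have hz₂_sub : z₂ - β ≠ 0 := sub_ne_zero.mpr hz₂β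
  unfold Fbd boundaryRho
  field_simp
  ring

theorem Fbd_sq_eq_zero {z₁ z₂ : ℂ} (hz₂ : z₂ ≠ 0) : Fbd (· ^ 2) z₁ z₂ = 0 := by
  unfold Fbd
  field_simp
  ring

/-- Sufficiency of the one-parameter family: `ρ(z) = z(1 − βz)/(z − β)` and
`ρ(z) = z²` both solve the boundary functional equation. -/
theorem boundary_functional_equation_solutions :
    (∀ β : ℂ, ∀ z1 z2 : ℂ, z1 ≠ 0 → z1 ≠ β → z2 ≠ 0 → z2 ≠ β →
      Fbd (fun z => z * (1 - β * z) / (z - β)) z1 z2 = 0)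
    ∧ (∀ z1 z2 : ℂ, z1 ≠ 0 → z2 ≠ 0 → Fbd (fun z => z ^ 2) z1 z2 = 0) :=
  ⟨fun _ _ _ _ hz₁ hz₂ hz₂β => Fbd_boundaryRho_eq_zero hz₁ hz₂ hz₂β,
    fun _ _ _ hz₂ => Fbd_sq_eq_zero hz₂⟩
end
end

section
/- Necessity (classification of solutions of the boundary functional equation): let D ⊆ ℂ∖{0} be a set containing an open neighborhood of 1, and let ρ : D → ℂ satisfy F(z1, z2) = 0 for all z1, z2 ∈ D. Then: (a) either ρ(1) = 1, or ρ(z) = −z for all z ∈ D∖{1}; (b) if ρ(1) = 1 and ρ is differentiable at 1 with d := ρ′(1), then for every z ∈ D one has ρ(z)·(2z + d(1 − z)) = z·(2 − d(1 − z)); consequently, if d = 2 then ρ(z) = z² for all z ∈ D, and if d ≠ 2 then, with β := d/(d − 2), ρ(z) = z(1 − βz)/(z − β) for all z ∈ D with z ≠ β. -/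
/-!
Putting `z₂ = 1` factors the equation as `(1 - z)(1 - ρ 1)(z + ρ z) = 0`, which gives the
dichotomy. When `ρ 1 = 1`, fix `z` and clear the denominator of `F(z, w)`: the resulting
expression vanishes identically in `w` near `1`, so its derivative at `w = 1` vanishes, and
that derivative is exactly the linear relation between `ρ z` and `z` involving `d = ρ' 1`.
-/

noncomputable section

open Filter Topology

namespace Fbd

variable {ρ : ℂ → ℂ} {z w d : ℂ}

def cleared (ρ : ℂ → ℂ) (z w : ℂ) : ℂ :=
  (w - z) * (z * w - ρ z * ρ w) + (1 - z * w) * (w * ρ z - z * ρ w)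

theorem mul_eq_cleared (hw : w ≠ 0) : w * Fbd ρ z w = cleared ρ z w := by
  unfold Fbd cleared
  field_simp

theorem one_right : Fbd ρ z 1 = (1 - z) * (1 - ρ 1) * (z + ρ z) := by
  unfold Fbd
  ring

theorem eq_neg_of_eq_zero_one_right (hρ : ρ 1 ≠ 1) (hz : z ≠ 1) (h : Fbd ρ z 1 = 0) :
    ρ z = -z := by
  rw [one_right, mul_eq_zero, mul_eq_zero, sub_eq_zero, sub_eq_zero] at h
  rcases h with (h | h) | h
  · exact absurd h.symm hz
  · exact absurd h.symm hρ
  · exact eq_neg_of_add_eq_zero_right h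

theorem hasDerivAt_cleared_one (h1 : ρ 1 = 1) (hd : HasDerivAt ρ d 1) :
    HasDerivAt (cleared ρ z) (z * (2 - d * (1 - z)) - ρ z * (2 * z + d * (1 - z))) 1 := by
  have hid : HasDerivAt (fun w : ℂ => w) 1 1 := hasDerivAt_id 1
  have h : HasDerivAt (cleared ρ z)
      ((1 * (z * 1 - ρ z * ρ 1) + (1 - z) * (z * 1 - ρ z * d))
        + ((0 - z * 1) * (1 * ρ z - z * ρ 1) + (1 - z * 1) * (1 * ρ z - z * d))) 1 :=
    ((hid.sub_const z).mul ((hid.const_mul z).sub (hd.const_mul (ρ z)))).add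
      (((hasDerivAt_const 1 (1 : ℂ)).sub (hid.const_mul z)).mul
        ((hid.mul_const (ρ z)).sub (hd.const_mul z)))
  exact h.congr_deriv (by rw [h1]; ring)

theorem mul_eq_of_eventually_eq_zero (h1 : ρ 1 = 1) (hd : HasDerivAt ρ d 1)
    (hF : ∀ᶠ w in 𝓝 1, Fbd ρ z w = 0) :
    ρ z * (2 * z + d * (1 - z)) = z * (2 - d * (1 - z)) := by
  have hzero : cleared ρ z =ᶠ[𝓝 1] fun _ => 0 := by
    filter_upwards [hF, eventually_ne_nhds one_ne_zero] with w hw hw0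
    rw [← mul_eq_cleared hw0, hw, mul_zero]
  have hderiv := (hasDerivAt_cleared_one h1 hd (z := z)).unique
    ((hasDerivAt_const (1 : ℂ) (0 : ℂ)).congr_of_eventuallyEq hzero)
  linear_combination -hderiv

end Fbd

theorem boundary_functional_equation_classification_general
    (D : Set ℂ) (ρ : ℂ → ℂ) (hD1 : D ∈ nhds (1 : ℂ))
    (hF : ∀ z1 ∈ D, ∀ z2 ∈ D, Fbd ρ z1 z2 = 0) :
    (ρ 1 = 1 ∨ ∀ z ∈ D, z ≠ 1 → ρ z = -z)
    ∧ (∀ d : ℂ, ρ 1 = 1 → HasDerivAt ρ d 1 →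
        (∀ z ∈ D, ρ z * (2 * z + d * (1 - z)) = z * (2 - d * (1 - z)))
        ∧ (d = 2 → ∀ z ∈ D, ρ z = z ^ 2)
        ∧ (d ≠ 2 → ∀ z ∈ D, z ≠ d / (d - 2) →
            ρ z = z * (1 - (d / (d - 2)) * z) / (z - d / (d - 2)))) := by
  have h1D : (1 : ℂ) ∈ D := mem_of_mem_nhds hD1
  refine ⟨?_, fun d h1 hd => ?_⟩
  · by_cases hρ1 : ρ 1 = 1
    · exact Or.inl hρ1
    · exact Or.inr fun z hz hz1 => Fbd.eq_neg_of_eq_zero_one_right hρ1 hz1 (hF z hz 1 h1D)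
  have key : ∀ z ∈ D, ρ z * (2 * z + d * (1 - z)) = z * (2 - d * (1 - z)) :=
    fun z hz => Fbd.mul_eq_of_eventually_eq_zero h1 hd (mem_of_superset hD1 (hF z hz))
  refine ⟨key, fun hd2 z hz => ?_, fun hd2 z hz hzβ => ?_⟩
  · linear_combination (key z hz) / 2 - (ρ z + z) * (1 - z) / 2 * hd2
  · rw [eq_div_iff (sub_ne_zero.mpr hzβ)]
    field_simp [sub_ne_zero.mpr hd2]
    linear_combination -key z hz

/-- Necessity: classification of the solutions of the boundary functional
equation on a domain `D ⊆ ℂ∖{0}` containing an open neighborhood of `1`. -/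
theorem boundary_functional_equation_classification
    (D : Set ℂ) (ρ : ℂ → ℂ) (hD0 : ∀ z ∈ D, z ≠ 0) (hD1 : D ∈ nhds (1 : ℂ))
    (hF : ∀ z1 ∈ D, ∀ z2 ∈ D, Fbd ρ z1 z2 = 0) :
    (ρ 1 = 1 ∨ ∀ z ∈ D, z ≠ 1 → ρ z = -z)
    ∧ (∀ d : ℂ, ρ 1 = 1 → HasDerivAt ρ d 1 →
        (∀ z ∈ D, ρ z * (2 * z + d * (1 - z)) = z * (2 - d * (1 - z)))
        ∧ (d = 2 → ∀ z ∈ D, ρ z = z ^ 2)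
        ∧ (d ≠ 2 → ∀ z ∈ D, z ≠ d / (d - 2) →
            ρ z = z * (1 - (d / (d - 2)) * z) / (z - d / (d - 2)))) :=
  boundary_functional_equation_classification_general D ρ hD1 hF
end
end

section
/- Infinite product formula for the normalization factor: let M > N ≥ 0 be integers, let q ∈ ℂ with 0 < |q| < 1, set p = q^{2(M−N)}, and let z ∈ ℂ∖{0} with |q²z| < 1 and |q²/z| < 1. Then the series S(z) = Σ_{m=1}^{∞} ( (q^{(M−N−1)m} − q^{−(M−N−1)m}) / ( m·(q^{(M−N)m} − q^{−(M−N)m}) ) )·q^m·(z^m − z^{−m}) converges absolutely, and exp(−S(z)) = ( (q²z; p)_∞ · (p z^{−1}; p)_∞ ) / ( (p z; p)_∞ · (q² z^{−1}; p)_∞ ). -/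
/-!
With `p = q^(2(M-N))`, `A = q^m` and `B = q^((M-N)m)`, the `m`-th term of `S` is
`(A² - B²)(z^m - z^(-m)) / (m (1 - B²))`, a signed sum of four terms `a^m / (m (1 - p^m))`
with `a ∈ {q²z, p/z}` (sign `+`) and `a ∈ {pz, q²/z}` (sign `-`), all of norm `< 1`.
For `‖a‖, ‖p‖ < 1`, expanding `1 / (1 - p^m)` as a geometric series and exchanging the
absolutely convergent double sum gives `∑ₘ a^m / (m (1 - p^m)) = ∑ₖ ∑ₘ (a p^k)^m / m
= -∑ₖ log (1 - a p^k)`, whose negative exponentiates to `(a; p)_∞`.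
-/

noncomputable section

/-- The `m`-th term of the series `S(z)` defining the normalization factor
`r(z)` of the `U_q(ŝl(M+1|N+1))` R-matrix. -/
def sTerm (M N : ℕ) (q z : ℂ) (m : ℕ) : ℂ :=
  ((q ^ (((M : ℤ) - (N : ℤ) - 1) * (m : ℤ)) - q ^ (-(((M : ℤ) - (N : ℤ) - 1) * (m : ℤ)))) /
      ((m : ℂ) * (q ^ (((M : ℤ) - (N : ℤ)) * (m : ℤ)) - q ^ (-(((M : ℤ) - (N : ℤ)) * (m : ℤ)))))) *
    q ^ (m : ℕ) * (z ^ (m : ℤ) - z ^ (-(m : ℤ)))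

/-- The infinite product `(a; p)_∞ = Π_{k=0}^{∞} (1 − a p^k)`. -/
def qPoch (a p : ℂ) : ℂ := ∏' k : ℕ, (1 - a * p ^ k)

open Complex

-- Shifted to start at `m = 0`: these are the `(m + 1)`-st terms of the series above.
def qPochLogTerm (a p : ℂ) (k m : ℕ) : ℂ := (a * p ^ k) ^ (m + 1) / (m + 1)

def qPochLogCoeff (a p : ℂ) (m : ℕ) : ℂ := a ^ (m + 1) / ((m + 1) * (1 - p ^ (m + 1)))

lemma one_sub_ne_zero_of_norm_lt_one {R : Type*} [NormedRing R] [NormOneClass R] {x : R}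
    (hx : ‖x‖ < 1) : 1 - x ≠ 0 :=
  sub_ne_zero.mpr fun h => by simp [← h] at hx

lemma norm_mul_pow_lt_one {R : Type*} [NormedDivisionRing R] {a p : R} (ha : ‖a‖ < 1)
    (hp : ‖p‖ ≤ 1) (k : ℕ) : ‖a * p ^ k‖ < 1 := by
  rw [norm_mul, norm_pow]
  exact mul_lt_one_of_nonneg_of_lt_one_left (norm_nonneg a) ha (pow_le_one₀ (norm_nonneg p) hp)

section QPochLog

variable {a p : ℂ}

lemma norm_qPochLogTerm_le (hp : ‖p‖ ≤ 1) (k m : ℕ) :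
    ‖qPochLogTerm a p k m‖ ≤ ‖p‖ ^ k * ‖a‖ ^ (m + 1) := by
  have hm : (1 : ℝ) ≤ ‖(m : ℂ) + 1‖ := by
    rw [← Nat.cast_add_one, Complex.norm_natCast]
    exact_mod_cast Nat.le_add_left 1 m
  calc ‖qPochLogTerm a p k m‖ ≤ ‖a * p ^ k‖ ^ (m + 1) := by
        rw [qPochLogTerm, norm_div, norm_pow]
        exact div_le_self (by positivity) hm
    _ = (‖p‖ ^ k) ^ (m + 1) * ‖a‖ ^ (m + 1) := by rw [norm_mul, norm_pow, mul_pow, mul_comm]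
    _ ≤ ‖p‖ ^ k * ‖a‖ ^ (m + 1) := by
        gcongr
        exact pow_le_of_le_one (by positivity) (pow_le_one₀ (norm_nonneg p) hp) m.succ_ne_zero

lemma summable_qPochLogTerm (ha : ‖a‖ < 1) (hp : ‖p‖ < 1) :
    Summable (Function.uncurry (qPochLogTerm a p)) := by
  have hgeom_a : Summable fun m : ℕ => ‖a‖ ^ (m + 1) :=
    (summable_nat_add_iff 1).mpr (summable_geometric_of_lt_one (norm_nonneg a) ha)
  refine Summable.of_norm_bounded
    ((summable_geometric_of_lt_one (norm_nonneg p) hp).mul_of_nonneg hgeom_a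
      (fun _ => by positivity) (fun _ => by positivity)) fun km => ?_
  exact norm_qPochLogTerm_le hp.le km.1 km.2

lemma hasSum_qPochLogTerm_qPochLogCoeff (hp : ‖p‖ < 1) (m : ℕ) :
    HasSum (fun k => qPochLogTerm a p k m) (qPochLogCoeff a p m) := by
  have hpm : ‖p ^ (m + 1)‖ < 1 := by
    rw [norm_pow]; exact pow_lt_one₀ (norm_nonneg p) hp m.succ_ne_zero
  have h := (hasSum_geometric_of_norm_lt_one hpm).mul_left (a ^ (m + 1) / ((m : ℂ) + 1))
  rw [← div_eq_mul_inv, div_div] at h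
  refine h.congr_fun fun k => ?_
  rw [qPochLogTerm, mul_pow, pow_right_comm]
  ring

lemma hasSum_qPochLogTerm_neg_log (ha : ‖a‖ < 1) (hp : ‖p‖ ≤ 1) (k : ℕ) :
    HasSum (qPochLogTerm a p k) (-log (1 - a * p ^ k)) :=
  hasSum_taylorSeries_neg_log' (norm_mul_pow_lt_one ha hp k)

lemma summable_qPochLogCoeff (ha : ‖a‖ < 1) (hp : ‖p‖ < 1) : Summable (qPochLogCoeff a p) :=
  (summable_qPochLogTerm ha hp).prod_symm.prod.congr fun m =>
    (hasSum_qPochLogTerm_qPochLogCoeff hp m).tsum_eq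

lemma cexp_neg_tsum_qPochLogCoeff (ha : ‖a‖ < 1) (hp : ‖p‖ < 1) :
    exp (-∑' m, qPochLogCoeff a p m) = qPoch a p := by
  have hF := summable_qPochLogTerm ha hp
  have hcol k := (hasSum_qPochLogTerm_neg_log ha hp.le k).tsum_eq
  have hswap : ∑' m, qPochLogCoeff a p m = -∑' k, log (1 - a * p ^ k) := by
    calc ∑' m, qPochLogCoeff a p m = ∑' m, ∑' k, qPochLogTerm a p k m :=
          tsum_congr fun m => (hasSum_qPochLogTerm_qPochLogCoeff hp m).tsum_eq.symm
      _ = ∑' k, ∑' m, qPochLogTerm a p k m := hF.tsum_comm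
      _ = -∑' k, log (1 - a * p ^ k) := by simp only [hcol, tsum_neg]
  have hlog : Summable fun k => log (1 - a * p ^ k) := by
    simpa [hcol] using hF.prod.neg
  have hne k := one_sub_ne_zero_of_norm_lt_one (norm_mul_pow_lt_one ha hp.le k)
  rw [hswap, neg_neg, qPoch]
  exact cexp_tsum_eq_tprod hne hlog

end QPochLog

lemma sTerm_succ_eq {M N : ℕ} (hMN : N < M) {q p : ℂ} (hq0 : q ≠ 0) (hq1 : ‖q‖ < 1)
    (hp : q ^ (2 * (M - N)) = p) (z : ℂ) (m : ℕ) :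
    sTerm M N q z (m + 1) =
      qPochLogCoeff (q ^ 2 * z) p m + qPochLogCoeff (p / z) p m
        - (qPochLogCoeff (p * z) p m + qPochLogCoeff (q ^ 2 / z) p m) := by
  have hMN' : ((M - N : ℕ) : ℤ) = M - N := by omega
  have hexp₁ : ((M : ℤ) - N - 1) * ((m + 1 : ℕ) : ℤ)
      = ((M - N) * (m + 1) : ℕ) - ((m + 1 : ℕ) : ℤ) := by
    push_cast [hMN']; ring
  have hexp₂ : ((M : ℤ) - N) * ((m + 1 : ℕ) : ℤ) = ((M - N) * (m + 1) : ℕ) := by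
    push_cast [hMN']; ring
  have hpB : p ^ (m + 1) = (q ^ ((M - N) * (m + 1))) ^ 2 := by
    rw [← hp, ← pow_mul, ← pow_mul]; ring_nf
  have hpm : 1 - p ^ (m + 1) ≠ 0 := by
    refine one_sub_ne_zero_of_norm_lt_one ?_
    rw [← hp, ← pow_mul, norm_pow]
    exact pow_lt_one₀ (norm_nonneg q) hq1 (mul_ne_zero (by omega) m.succ_ne_zero)
  rw [sTerm, qPochLogCoeff, qPochLogCoeff, qPochLogCoeff, qPochLogCoeff, hexp₁, hexp₂]
  simp only [zpow_neg, zpow_sub₀ hq0, zpow_natCast, div_eq_mul_inv _ z, mul_pow, inv_pow, hpB,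
    pow_right_comm q 2 (m + 1)]
  rw [hpB] at hpm
  push_cast
  have hA : q ^ (m + 1) ≠ 0 := pow_ne_zero _ hq0
  have hB : q ^ ((M - N) * (m + 1)) ≠ 0 := pow_ne_zero _ hq0
  have hn : (m : ℂ) + 1 ≠ 0 := Nat.cast_add_one_ne_zero m
  generalize q ^ (m + 1) = A at *
  generalize q ^ ((M - N) * (m + 1)) = B at *
  generalize (z ^ (m + 1))⁻¹ = D
  generalize z ^ (m + 1) = C
  have hB2 : B ^ 2 - 1 ≠ 0 := sub_ne_zero_of_ne (sub_ne_zero.mp hpm).symm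
  field_simp
  ring

theorem exp_neg_S_eq_infiniteProduct_general (M N : ℕ) (hMN : N < M) (q z : ℂ)
    (hq0 : q ≠ 0) (hq1 : ‖q‖ < 1)
    (h1 : ‖q ^ 2 * z‖ < 1) (h2 : ‖q ^ 2 / z‖ < 1) :
    Summable (fun m : ℕ => ‖sTerm M N q z (m + 1)‖)
    ∧ Complex.exp (-(∑' m : ℕ, sTerm M N q z (m + 1)))
      = (qPoch (q ^ 2 * z) (q ^ (2 * (M - N))) * qPoch (q ^ (2 * (M - N)) / z) (q ^ (2 * (M - N))))
        / (qPoch (q ^ (2 * (M - N)) * z) (q ^ (2 * (M - N)))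
            * qPoch (q ^ 2 / z) (q ^ (2 * (M - N)))) := by
  set p := q ^ (2 * (M - N)) with hp
  have hpq : ‖p‖ ≤ ‖q ^ 2‖ := by
    simp only [p, norm_pow]
    exact pow_le_pow_of_le_one (norm_nonneg q) hq1.le (by omega)
  have hp1 : ‖p‖ < 1 :=
    hpq.trans_lt (by rw [norm_pow]; exact pow_lt_one₀ (norm_nonneg q) hq1 two_ne_zero)
  have hpz : ‖p * z‖ < 1 := lt_of_le_of_lt (by rw [norm_mul, norm_mul]; gcongr) h1
  have hpz' : ‖p / z‖ < 1 := lt_of_le_of_lt (by rw [norm_div, norm_div]; gcongr) h2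
  simp only [sTerm_succ_eq hMN hq0 hq1 hp.symm]
  have hs₁ := summable_qPochLogCoeff h1 hp1
  have hs₂ := summable_qPochLogCoeff hpz hp1
  have hs₃ := summable_qPochLogCoeff h2 hp1
  have hs₄ := summable_qPochLogCoeff hpz' hp1
  refine ⟨summable_norm_iff.mpr ((hs₁.add hs₄).sub (hs₂.add hs₃)), ?_⟩
  rw [(hs₁.add hs₄).tsum_sub (hs₂.add hs₃), hs₁.tsum_add hs₄, hs₂.tsum_add hs₃,
    show ∀ a b c d : ℂ, -(a + d - (b + c)) = -a + -d - (-b + -c) by intros; ring,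
    exp_sub, exp_add, exp_add, cexp_neg_tsum_qPochLogCoeff h1 hp1,
    cexp_neg_tsum_qPochLogCoeff hpz hp1, cexp_neg_tsum_qPochLogCoeff h2 hp1,
    cexp_neg_tsum_qPochLogCoeff hpz' hp1]

/-- Infinite product formula for the normalization factor: for `M > N`,
the series `S(z)` converges absolutely and
`exp(−S(z)) = (q²z; p)_∞ (p/z; p)_∞ / ((pz; p)_∞ (q²/z; p)_∞)` with
`p = q^{2(M−N)}`. -/
theorem exp_neg_S_eq_infiniteProduct (M N : ℕ) (hMN : N < M) (q z : ℂ)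
    (hq0 : q ≠ 0) (hq1 : ‖q‖ < 1) (hz : z ≠ 0)
    (h1 : ‖q ^ 2 * z‖ < 1) (h2 : ‖q ^ 2 / z‖ < 1) :
    Summable (fun m : ℕ => ‖sTerm M N q z (m + 1)‖)
    ∧ Complex.exp (-(∑' m : ℕ, sTerm M N q z (m + 1)))
      = (qPoch (q ^ 2 * z) (q ^ (2 * (M - N))) * qPoch (q ^ (2 * (M - N)) / z) (q ^ (2 * (M - N))))
        / (qPoch (q ^ (2 * (M - N)) * z) (q ^ (2 * (M - N)))
            * qPoch (q ^ 2 / z) (q ^ (2 * (M - N)))) :=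
  exp_neg_S_eq_infiniteProduct_general M N hMN q z hq0 hq1 h1 h2
end
end

section
/- Second q-deformed Cartan identity: let M, N ≥ 0 be integers with M ≠ N and set n′ = M+N+1. Then for every q ∈ ℂ∖{0} with q² ≠ 1, every integer m ≥ 1, and all 1 ≤ i, j ≤ n′: Σ_{k=1}^{n′} Σ_{l=1}^{n′} [α_{ik} m]_q · [β_{ik} m]_q · [α_{jl} m]_q · [β_{jl} m]_q · [A_{kl} m]_q = [α_{ij} m]_q · [β_{ij} m]_q · ([m]_q)² · [(M−N) m]_q. (This identity is equivalent to the commutation relation [h*_{i,m}, h*_{j,n}] = δ_{m+n,0} [α_{ij}m]_q[β_{ij}m]_q[m]_q/(m[(M−N)m]_q) for the dual bosonic generators at level c = 1.) -/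
/-!
Put `u = q^m` and `{a} = u^a - u^{-a}`, so that `[a m]_q = {a} / (q - q⁻¹)`. After clearing the
common factor, the identity says that `G_{jl} = {α_{jl}} {β_{jl}}` satisfies
`∑_l G_{jl} {A_{kl}} = δ_{jk} {1}² {M - N}`. With the closed forms `α(t) = M + 1 - |t - M|` and
`β(t) = |t - M| - N - 1` on all of `ℤ`, row `j` of `G` vanishes at `l = -1` and `l = n'`, so each of
these sums has only the three terms `l = k - 1, k, k + 1`. For `k ≠ j` the row of `G` near `k` is a
constant times `{|t - M| - c}`, which the tridiagonal `{A}` kills because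
`{a - 1} + {a + 1} = (u + u⁻¹) {a}` away from the kink and `|t - M|` is symmetric about `t = M`.
For `k = j` one uses `{a} {b + 1} - {a - 1} {b} = {1} {a + b}` together with `α + β = M - N`.
-/

noncomputable section

/-- The q-integer `[a]_q = (q^a − q^{−a})/(q − q^{−1})`. -/
def qint (q : ℂ) (a : ℤ) : ℂ := (q ^ a - q ^ (-a)) / (q - q⁻¹)

/-- `α_{ij}`: `min(i,j)` (1-based) if `min(i,j) ≤ M+1`, else `2(M+1) − min(i,j)`. -/
def alphaC (M : ℕ) {n' : ℕ} (i j : Fin n') : ℤ :=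
  if min (i : ℕ) (j : ℕ) ≤ M then (min (i : ℕ) (j : ℕ) : ℤ) + 1
  else (2 * (M : ℤ) + 1) - (min (i : ℕ) (j : ℕ) : ℤ)

/-- `β_{ij}`: `M − N − max(i,j)` (1-based) if `max(i,j) ≤ M+1`,
else `−M − N − 2 + max(i,j)`. -/
def betaC (M N : ℕ) {n' : ℕ} (i j : Fin n') : ℤ :=
  if max (i : ℕ) (j : ℕ) ≤ M then (M : ℤ) - (N : ℤ) - ((max (i : ℕ) (j : ℕ) : ℤ) + 1)
  else -(M : ℤ) - (N : ℤ) - 2 + ((max (i : ℕ) (j : ℕ) : ℤ) + 1)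

/-- The Cartan matrix of `sl(M+1|N+1)` in the distinguished basis
(indices 1-based, here realised on `Fin (M+N+1)` with 0-based values). -/
def CartanSL (M N : ℕ) (i j : Fin (M + N + 1)) : ℤ :=
  if i = j then (if (i : ℕ) < M then 2 else if (i : ℕ) = M then 0 else -2)
  else if (i : ℕ) + 1 = (j : ℕ) ∨ (j : ℕ) + 1 = (i : ℕ) then
    (if min (i : ℕ) (j : ℕ) < M then -1 else 1)
  else 0

open Finset

variable {K : Type*} [Field K]

def qnum (u : K) (a : ℤ) : K := u ^ a - u ^ (-a)

@[simp] lemma qnum_zero (u : K) : qnum u 0 = 0 := by simp [qnum]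

lemma qnum_neg (u : K) (a : ℤ) : qnum u (-a) = -qnum u a := by simp [qnum]

lemma qnum_two_mul (u : K) (hu : u ≠ 0) (a : ℤ) :
    qnum u 2 * qnum u a = qnum u 1 * (qnum u (a - 1) + qnum u (a + 1)) := by
  simp only [qnum, zpow_neg, zpow_sub₀ hu, zpow_add₀ hu, zpow_one, zpow_two]
  field_simp
  ring

lemma qnum_mul_qnum_add_one_sub (u : K) (hu : u ≠ 0) (a b : ℤ) :
    qnum u a * qnum u (b + 1) - qnum u (a - 1) * qnum u b = qnum u 1 * qnum u (a + b) := by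
  simp only [qnum, zpow_neg, zpow_sub₀ hu, zpow_add₀ hu, zpow_one]
  field_simp
  ring

lemma qint_mul_natCast (q : ℂ) (a : ℤ) (m : ℕ) :
    qint q (a * m) = (q - q⁻¹)⁻¹ * qnum (q ^ (m : ℤ)) a := by
  rw [qint, qnum, div_eq_inv_mul, ← zpow_mul, ← zpow_mul, mul_neg, mul_comm (m : ℤ)]

lemma Fin.sum_univ_eq_sum_Ico_int {β : Type*} [AddCommMonoid β] (n : ℕ) (f : ℤ → β) :
    ∑ l : Fin n, f l = ∑ l ∈ Ico (0 : ℤ) n, f l := by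
  rw [Int.Ico_eq_finset_map, sum_map, Fin.sum_univ_eq_sum_range (fun l => f l)]
  simp

lemma sum_Ico_eq_three_terms {β : Type*} [AddCommMonoid β] {f : ℤ → β} {n : ℕ} {k : ℤ}
    (hk₀ : 0 ≤ k) (hkn : k < n) (hf₀ : f (-1) = 0) (hfn : f n = 0)
    (hf : ∀ l, l < k - 1 ∨ k + 1 < l → f l = 0) :
    ∑ l ∈ Ico (0 : ℤ) n, f l = f (k - 1) + f k + f (k + 1) := by
  have h₁ : ∑ l ∈ Ico (0 : ℤ) n, f l = ∑ l ∈ Icc (-1 : ℤ) n, f l := by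
    refine sum_subset (fun l hl => ?_) (fun l hl hl' => ?_)
    · simp only [mem_Ico, mem_Icc] at hl ⊢; omega
    · simp only [mem_Ico, mem_Icc] at hl hl'
      obtain rfl | rfl : l = -1 ∨ l = n := by omega
      exacts [hf₀, hfn]
  have h₂ : ∑ l ∈ {k - 1, k, k + 1}, f l = ∑ l ∈ Icc (-1 : ℤ) n, f l := by
    refine sum_subset (fun l hl => ?_) (fun l _ hl => hf l ?_)
    · simp only [mem_insert, mem_singleton, mem_Icc] at hl ⊢; omega
    · simp only [mem_insert, mem_singleton] at hl; omega
  rw [h₁, ← h₂, sum_insert (by simp only [mem_insert, mem_singleton]; omega),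
    sum_pair (by omega : k ≠ k + 1), add_assoc]

section Cartan

variable (M N : ℕ)

def alphaZ (t : ℤ) : ℤ := M + 1 - |t - M|

def betaZ (t : ℤ) : ℤ := |t - M| - (N + 1)

def cartanZ (k l : ℤ) : ℤ :=
  if k = l then (if k < M then 2 else if k = M then 0 else -2)
  else if k + 1 = l ∨ l + 1 = k then (if min k l < M then -1 else 1)
  else 0

variable {M N}

lemma alphaC_eq_alphaZ {n' : ℕ} (i j : Fin n') : alphaC M i j = alphaZ M (min (i : ℤ) j) := by
  rw [alphaC, alphaZ, ← Nat.cast_min]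
  split_ifs with h
  · rw [abs_of_nonpos (by omega)]; ring
  · rw [abs_of_pos (by omega)]; ring

lemma betaC_eq_betaZ {n' : ℕ} (i j : Fin n') : betaC M N i j = betaZ M N (max (i : ℤ) j) := by
  rw [betaC, betaZ, ← Nat.cast_max]
  split_ifs with h
  · rw [abs_of_nonpos (by omega)]; ring
  · rw [abs_of_pos (by omega)]; ring

lemma CartanSL_eq_cartanZ (k l : Fin (M + N + 1)) : CartanSL M N k l = cartanZ M k l := by
  simp only [CartanSL, cartanZ, Fin.ext_iff]
  split_ifs <;> omega

lemma cartanZ_eq_zero {k l : ℤ} (h : l < k - 1 ∨ k + 1 < l) : cartanZ M k l = 0 := by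
  rw [cartanZ]; split_ifs <;> omega

lemma cartanZ_row_of_lt {k : ℤ} (hk : k < M) :
    cartanZ M k (k - 1) = -1 ∧ cartanZ M k k = 2 ∧ cartanZ M k (k + 1) = -1 := by
  refine ⟨?_, ?_, ?_⟩ <;> rw [cartanZ] <;> split_ifs <;> omega

lemma cartanZ_row_self :
    cartanZ M M (M - 1) = -1 ∧ cartanZ M M M = 0 ∧ cartanZ M M (M + 1) = 1 := by
  refine ⟨?_, ?_, ?_⟩ <;> rw [cartanZ] <;> split_ifs <;> omega

lemma cartanZ_row_of_gt {k : ℤ} (hk : M < k) :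
    cartanZ M k (k - 1) = 1 ∧ cartanZ M k k = -2 ∧ cartanZ M k (k + 1) = 1 := by
  refine ⟨?_, ?_, ?_⟩ <;> rw [cartanZ] <;> split_ifs <;> omega

end Cartan

section Rows

variable {M N : ℕ} {u : K}

lemma qnum_abs_sub_cartanZ_row (hu : u ≠ 0) (c k : ℤ) :
    qnum u (|k - 1 - M| - c) * qnum u (cartanZ M k (k - 1))
      + qnum u (|k - M| - c) * qnum u (cartanZ M k k)
      + qnum u (|k + 1 - M| - c) * qnum u (cartanZ M k (k + 1)) = 0 := by
  rcases lt_trichotomy k M with hk | rfl | hk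
  · obtain ⟨h₁, h₂, h₃⟩ := cartanZ_row_of_lt hk
    rw [h₁, h₂, h₃, abs_of_neg (by omega : k - 1 - M < 0), abs_of_neg (by omega : k - M < 0),
      abs_of_nonpos (by omega : k + 1 - M ≤ 0), qnum_neg]
    linear_combination (norm := ring_nf) qnum_two_mul u hu (M - k - c)
  · obtain ⟨h₁, h₂, h₃⟩ := cartanZ_row_self (M := M)
    simp [h₁, h₂, h₃, qnum_neg]
  · obtain ⟨h₁, h₂, h₃⟩ := cartanZ_row_of_gt hk
    rw [h₁, h₂, h₃, abs_of_nonneg (by omega : 0 ≤ k - 1 - M), abs_of_pos (by omega : 0 < k - M),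
      abs_of_pos (by omega : 0 < k + 1 - M), qnum_neg]
    linear_combination (norm := ring_nf) -qnum_two_mul u hu (k - M - c)

lemma qnum_alphaZ_mul_betaZ_cartanZ_row (hu : u ≠ 0) (k : ℤ) :
    qnum u (alphaZ M (k - 1)) * qnum u (betaZ M N k) * qnum u (cartanZ M k (k - 1))
      + qnum u (alphaZ M k) * qnum u (betaZ M N k) * qnum u (cartanZ M k k)
      + qnum u (alphaZ M k) * qnum u (betaZ M N (k + 1)) * qnum u (cartanZ M k (k + 1))
      = qnum u 1 ^ 2 * qnum u (M - N) := by
  simp only [alphaZ, betaZ]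
  rcases lt_trichotomy k M with hk | rfl | hk
  · obtain ⟨h₁, h₂, h₃⟩ := cartanZ_row_of_lt hk
    rw [h₁, h₂, h₃, abs_of_neg (by omega : k - 1 - M < 0), abs_of_neg (by omega : k - M < 0),
      abs_of_nonpos (by omega : k + 1 - M ≤ 0), qnum_neg]
    linear_combination (norm := ring_nf)
      qnum u (k + 1) * qnum_two_mul u hu (M - k - (N + 1))
        + qnum u 1 * qnum_mul_qnum_add_one_sub u hu (k + 1) (M - k - (N + 1))
  · obtain ⟨h₁, h₂, h₃⟩ := cartanZ_row_self (M := M)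
    rw [h₁, h₂, h₃, show (M : ℤ) - 1 - M = -1 by ring, sub_self, add_sub_cancel_left, abs_neg,
      abs_one, abs_zero, qnum_neg, qnum_zero]
    linear_combination (norm := ring_nf)
      qnum u 1 * qnum_mul_qnum_add_one_sub u hu (M + 1) (-(N + 1))
  · obtain ⟨h₁, h₂, h₃⟩ := cartanZ_row_of_gt hk
    rw [h₁, h₂, h₃, abs_of_nonneg (by omega : 0 ≤ k - 1 - M), abs_of_pos (by omega : 0 < k - M),
      abs_of_pos (by omega : 0 < k + 1 - M), qnum_neg]
    linear_combination (norm := ring_nf)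
      -qnum u (k - M - (N + 1)) * qnum_two_mul u hu (M + 1 - (k - M))
        + qnum u 1 * qnum_mul_qnum_add_one_sub u hu (M + 1 - (k - M)) (k - M - (N + 1))

end Rows

section InverseCartan

variable {M N : ℕ} {u : K}

lemma alphaZ_neg_one : alphaZ M (-1) = 0 := by
  rw [alphaZ, abs_of_neg (by omega)]; ring

lemma betaZ_add_add_one : betaZ M N (M + N + 1) = 0 := by
  rw [betaZ, abs_of_pos (by omega)]; ring

lemma qnum_alphaZ (t : ℤ) : qnum u (alphaZ M t) = -qnum u (|t - M| - (M + 1)) := by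
  rw [alphaZ, ← qnum_neg, neg_sub]

def invCartanNum (u : K) (M N : ℕ) (j l : ℤ) : K :=
  qnum u (alphaZ M (min j l)) * qnum u (betaZ M N (max j l))

lemma sum_invCartanNum_mul_qnum_cartanZ (hu : u ≠ 0) {j k : ℤ} (hj₀ : 0 ≤ j) (hjn : j ≤ M + N)
    (hk₀ : 0 ≤ k) (hkn : k ≤ M + N) :
    ∑ l ∈ Ico (0 : ℤ) ↑(M + N + 1), invCartanNum u M N j l * qnum u (cartanZ M k l)
      = if k = j then qnum u 1 ^ 2 * qnum u (M - N) else 0 := by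
  rw [sum_Ico_eq_three_terms hk₀ (by omega)
    (by rw [invCartanNum, min_eq_right (by omega), alphaZ_neg_one, qnum_zero, zero_mul, zero_mul])
    (by rw [invCartanNum, max_eq_right (by omega), Nat.cast_add, Nat.cast_add, Nat.cast_one,
      betaZ_add_add_one, qnum_zero, mul_zero, zero_mul])
    fun l hl => by rw [cartanZ_eq_zero hl, qnum_zero, mul_zero]]
  simp only [invCartanNum]
  rcases lt_trichotomy k j with hkj | rfl | hkj
  · rw [if_neg hkj.ne, min_eq_right (by omega : k - 1 ≤ j), min_eq_right hkj.le,
      min_eq_right (by omega : k + 1 ≤ j), max_eq_left (by omega : k - 1 ≤ j), max_eq_left hkj.le,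
      max_eq_left (by omega : k + 1 ≤ j), qnum_alphaZ, qnum_alphaZ, qnum_alphaZ]
    linear_combination -qnum u (betaZ M N j) * qnum_abs_sub_cartanZ_row hu (M + 1) k
  · rw [if_pos rfl, min_eq_right (by omega : k - 1 ≤ k), min_self,
      min_eq_left (by omega : k ≤ k + 1), max_eq_left (by omega : k - 1 ≤ k), max_self,
      max_eq_right (by omega : k ≤ k + 1)]
    exact qnum_alphaZ_mul_betaZ_cartanZ_row hu k
  · rw [if_neg hkj.ne', min_eq_left (by omega : j ≤ k - 1), min_eq_left hkj.le,
      min_eq_left (by omega : j ≤ k + 1), max_eq_right (by omega : j ≤ k - 1), max_eq_right hkj.le,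
      max_eq_right (by omega : j ≤ k + 1), betaZ, betaZ, betaZ]
    linear_combination qnum u (alphaZ M j) * qnum_abs_sub_cartanZ_row hu (N + 1) k

lemma sum_qnum_alphaC_betaC_CartanSL (hu : u ≠ 0) (j k : Fin (M + N + 1)) :
    ∑ l, qnum u (alphaC M j l) * qnum u (betaC M N j l) * qnum u (CartanSL M N k l)
      = if k = j then qnum u 1 ^ 2 * qnum u (M - N) else 0 := by
  have h := sum_invCartanNum_mul_qnum_cartanZ (M := M) (N := N) (j := j) (k := k) hu
    (by omega) (by omega) (by omega) (by omega)
  rw [← Fin.sum_univ_eq_sum_Ico_int] at h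
  simpa only [invCartanNum, alphaC_eq_alphaZ, betaC_eq_betaZ, CartanSL_eq_cartanZ, Nat.cast_inj,
    Fin.val_inj] using h

end InverseCartan

theorem qdeformed_second_Cartan_general (M N : ℕ) (q : ℂ) (hq : q ≠ 0)
    (m : ℕ) (i j : Fin (M + N + 1)) :
    (∑ k : Fin (M + N + 1), ∑ l : Fin (M + N + 1),
      qint q (alphaC M i k * (m : ℤ)) * qint q (betaC M N i k * (m : ℤ)) *
        qint q (alphaC M j l * (m : ℤ)) * qint q (betaC M N j l * (m : ℤ)) *
        qint q (CartanSL M N k l * (m : ℤ)))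
    = qint q (alphaC M i j * (m : ℤ)) * qint q (betaC M N i j * (m : ℤ)) *
        (qint q (m : ℤ)) ^ 2 * qint q (((M : ℤ) - (N : ℤ)) * (m : ℤ)) := by
  set u := q ^ (m : ℤ)
  set c := (q - q⁻¹)⁻¹
  have hu : u ≠ 0 := zpow_ne_zero _ hq
  have hm : qint q m = c * qnum u 1 := by simpa only [one_mul] using qint_mul_natCast q 1 m
  simp only [hm, qint_mul_natCast]
  calc _ = c ^ 5 * ∑ k, qnum u (alphaC M i k) * qnum u (betaC M N i k) *
        ∑ l, qnum u (alphaC M j l) * qnum u (betaC M N j l) * qnum u (CartanSL M N k l) := by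
        simp only [mul_sum]
        exact sum_congr rfl fun k _ => sum_congr rfl fun l _ => by ring
    _ = c ^ 5 * ∑ k, qnum u (alphaC M i k) * qnum u (betaC M N i k) *
        if k = j then qnum u 1 ^ 2 * qnum u (M - N) else 0 := by
        simp only [sum_qnum_alphaC_betaC_CartanSL hu]
    _ = _ := by
        simp only [mul_ite, mul_zero, sum_ite_eq', mem_univ, if_true]
        ring

/-- Second q-deformed Cartan identity:
`Σ_{k,l} [α_{ik}m]_q [β_{ik}m]_q [α_{jl}m]_q [β_{jl}m]_q [A_{kl}m]_q
  = [α_{ij}m]_q [β_{ij}m]_q ([m]_q)² [(M−N)m]_q`. -/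
theorem qdeformed_second_Cartan (M N : ℕ) (hMN : M ≠ N) (q : ℂ) (hq : q ≠ 0)
    (hq2 : q ^ 2 ≠ 1) (m : ℕ) (hm : 1 ≤ m) (i j : Fin (M + N + 1)) :
    (∑ k : Fin (M + N + 1), ∑ l : Fin (M + N + 1),
      qint q (alphaC M i k * (m : ℤ)) * qint q (betaC M N i k * (m : ℤ)) *
        qint q (alphaC M j l * (m : ℤ)) * qint q (betaC M N j l * (m : ℤ)) *
        qint q (CartanSL M N k l * (m : ℤ)))
    = qint q (alphaC M i j * (m : ℤ)) * qint q (betaC M N i j * (m : ℤ)) *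
        (qint q (m : ℤ)) ^ 2 * qint q (((M : ℤ) - (N : ℤ)) * (m : ℤ)) :=
  qdeformed_second_Cartan_general M N q hq m i j
end
end
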